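/- Let Q be an Ω-algebra and X a set. The map sending a Q-topology τ on X to the set of Q-continuous maps (X,τ) → (S,u) into the Q-Sierpinski space, and the map sending a Q-topology τ to the optimal lift of all Q-continuous maps into (S,u), are mutually inverse bijections on the set of Q-topologies on X (each in fact being the identity). -/

import Mathlib

universe u v w x

/-- Closure of a set of `Q`-valued functions on `X` under the pointwise
Ω-algebra operations `ops`. -/
def Closed {Q : Type u} {I : Type v} {n : I → Type w} (ops : ∀ i, (n i → Q) → Q)
    {X : Type x} (B : Set (X → Q)) : Prop :=
  ∀ i (p : n i → X → Q), (∀ j, p j ∈ B) → (fun x => ops i (fun j => p j x)) ∈ B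

/-- A `Q`-topology on `X`: a nonempty subset of `Q^X` closed under the
pointwise operations, i.e. a subalgebra of the power algebra. -/
def IsQTop {Q : Type u} {I : Type v} {n : I → Type w} (ops : ∀ i, (n i → Q) → Q)
    {X : Type x} (τ : Set (X → Q)) : Prop :=
  τ.Nonempty ∧ Closed ops τ

/-- The subalgebra of `Q^X` generated by `S`: the intersection of all
subalgebras containing `S`. -/
def gen {Q : Type u} {I : Type v} {n : I → Type w} (ops : ∀ i, (n i → Q) → Q)
    {X : Type x} (S : Set (X → Q)) : Set (X → Q) :=
  ⋂₀ {B | S ⊆ B ∧ IsQTop ops B}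

/-- `Q`-continuity of `f : (X,τ) → (Y,η)` : preimages `α ∘ f` of members of `η`
belong to `τ`. -/
def QCont {Q : Type u} {I : Type v} {n : I → Type w} (ops : ∀ i, (n i → Q) → Q)
    {X : Type x} {Y : Type x} (τ : Set (X → Q)) (η : Set (Y → Q)) (f : X → Y) : Prop :=
  ∀ α ∈ η, (fun x => α (f x)) ∈ τ

/-- The `Q`-Sierpinski topology on `S = Q`: the subalgebra of `Q^Q` generated
by the identity map. -/
def sierp {Q : Type u} {I : Type v} {n : I → Type w} (ops : ∀ i, (n i → Q) → Q) :
    Set (Q → Q) :=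
  gen ops ({id} : Set (Q → Q))

/-!
A member `p` of a `Q`-topology `τ` is the same thing as a `Q`-continuous map `(X, τ) → (S, u)`:
continuity tests only the generator `id` of `u`, because the `q : Q → Q` with `q ∘ p ∈ τ` form a
subalgebra of `Q^Q`. Hence the continuous maps into `(S, u)` are exactly `τ`, and their composites
with members of `u` again lie in `τ` and include `τ`, so the optimal lift is `gen τ = τ`.
-/

section

variable {Q : Type u} {I : Type v} {n : I → Type w} (ops : ∀ i, (n i → Q) → Q)

theorem subset_gen {X : Type x} (S : Set (X → Q)) : S ⊆ gen ops S :=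
  fun _ hp _ hB => hB.1 hp

theorem id_mem_sierp : (id : Q → Q) ∈ sierp ops :=
  subset_gen ops _ rfl

variable {ops}

theorem gen_subset {X : Type x} {S B : Set (X → Q)} (hSB : S ⊆ B) (hB : IsQTop ops B) :
    gen ops S ⊆ B :=
  fun _ hp => hp B ⟨hSB, hB⟩

theorem gen_eq_self {X : Type x} {τ : Set (X → Q)} (hτ : IsQTop ops τ) : gen ops τ = τ :=
  (gen_subset subset_rfl hτ).antisymm (subset_gen ops τ)

theorem Closed.comap {X : Type x} {Y : Type*} {τ : Set (X → Q)} (hτ : Closed ops τ) (f : X → Y) :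
    Closed ops {q : Y → Q | (fun x => q (f x)) ∈ τ} :=
  fun i qs hqs => hτ i (fun j x => qs j (f x)) hqs

theorem qcont_gen_of_forall_mem {X Y : Type x} {τ : Set (X → Q)} {S : Set (Y → Q)} {f : X → Y}
    (hτ : Closed ops τ) (hS : S.Nonempty) (h : ∀ s ∈ S, (fun x => s (f x)) ∈ τ) :
    QCont ops τ (gen ops S) f := by
  obtain ⟨s, hs⟩ := hS
  exact gen_subset h ⟨⟨s, h s hs⟩, hτ.comap f⟩

theorem qcont_sierp_iff {X : Type u} {τ : Set (X → Q)} (hτ : Closed ops τ) {p : X → Q} :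
    QCont ops τ (sierp ops) p ↔ p ∈ τ := by
  refine ⟨fun hp => hp id (id_mem_sierp ops), fun hp => ?_⟩
  exact qcont_gen_of_forall_mem hτ ⟨id, rfl⟩ fun _ hs => hs ▸ hp

theorem setOf_comp_qcont_sierp_eq {X : Type u} {τ : Set (X → Q)} (hτ : Closed ops τ) :
    {p : X → Q | ∃ f : X → Q, QCont ops τ (sierp ops) f ∧
      ∃ q ∈ sierp ops, p = fun x => q (f x)} = τ := by
  refine Set.Subset.antisymm ?_ fun p hp => ?_
  · rintro _ ⟨f, hf, q, hq, rfl⟩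
    exact hf q hq
  · exact ⟨p, (qcont_sierp_iff hτ).2 hp, id, id_mem_sierp ops, rfl⟩

end

theorem stmt_15 {Q : Type u} {I : Type v} {n : I → Type w} (ops : ∀ i, (n i → Q) → Q)
    {X : Type u} :
    let Phi : Set (X → Q) → Set (X → Q) :=
      fun τ => {p : X → Q | QCont ops τ (sierp ops) p}
    let L : Set (X → Q) → Set (X → Q) :=
      fun τ => gen ops {p : X → Q | ∃ f : X → Q, QCont ops τ (sierp ops) f ∧
        ∃ q ∈ sierp ops, p = fun x => q (f x)}
    ∀ τ : Set (X → Q), IsQTop ops τ →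
      Phi τ = τ ∧ L τ = τ ∧ L (Phi τ) = τ ∧ Phi (L τ) = τ := by
  intro Phi L τ hτ
  have hPhi : Phi τ = τ := Set.ext fun _ => qcont_sierp_iff hτ.2
  have hL : L τ = τ := by
    change gen ops _ = τ
    rw [setOf_comp_qcont_sierp_eq hτ.2, gen_eq_self hτ]
  exact ⟨hPhi, hL, by rw [hPhi, hL], by rw [hL, hPhi]⟩
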